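/- arXiv:quant-ph/0509154 — 2 statements merged into one kernel-verified Lean document; each statement's English description precedes it below -/
import Mathlib

section
/- Let μ be a probability measure on ℝ with zero mean (∫ x dμ(x) = 0) and finite second moment V = ∫ x² dμ(x), and let g(t) = ∫ exp(i t x) dμ(x) be its characteristic function. Let (a_n) be any sequence of natural numbers with a_n ≤ n for all n. Then for every x ∈ ℝ, the limit lim_{n→∞} g(x/√n)^{a_n} · g(-x/√n)^{n - a_n} = exp(-V x² / 2) holds. -/
/-!
Since `μ` is centred with second moment `V`, Taylor's theorem gives `g t = 1 - V t² / 2 + o(t²)`,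
so `n (g (±x/√n) - 1) → -V x² / 2`, and hence also `n log g (±x/√n) → -V x² / 2`.
The logarithm of the product, `a_n log g (x/√n) + (n - a_n) log g (-x/√n)`, is a combination of
these two sequences with weights `a_n / n` and `1 - a_n / n` in `[0, 1]`, so it has the same limit.
-/

open MeasureTheory Complex Filter Asymptotics
open scoped Topology

lemma taylor_charFun_two_of_memLp (μ : Measure ℝ) [IsProbabilityMeasure μ] (h2 : MemLp id 2 μ) :
    (fun t : ℝ ↦ charFun μ t - (1 + (∫ x, x ∂μ) * t * I - (∫ x, x ^ 2 ∂μ) * t ^ 2 / 2))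
      =o[𝓝 0] fun t ↦ t ^ 2 := by
  have h := taylor_isLittleO_univ (x₀ := 0) (contDiff_charFun h2)
  simp only [sub_zero] at h
  refine h.congr_left fun t ↦ ?_
  rw [taylorWithinEval_charFun_zero h2]
  simp only [Finset.sum_range_succ, Finset.range_one, Finset.sum_singleton, Nat.factorial,
    Nat.cast_one, inv_one, pow_zero, pow_one, mul_pow, I_sq, mul_one, one_mul,
    integral_const, probReal_univ, smul_eq_mul, ofReal_one]
  ring

lemma tendsto_nat_mul_sub_one_of_isLittleO {f : ℝ → ℂ} {c : ℂ}
    (hf : (fun t ↦ f t - (1 + c * t ^ 2)) =o[𝓝 0] fun t ↦ t ^ 2) (x : ℝ) :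
    Tendsto (fun n : ℕ ↦ (n : ℂ) * (f (x / √n) - 1)) atTop (𝓝 (c * x ^ 2)) := by
  have h_scale : Tendsto (fun n : ℕ ↦ x / √n) atTop (𝓝 0) :=
    tendsto_const_nhds.div_atTop (Real.tendsto_sqrt_atTop.comp tendsto_natCast_atTop_atTop)
  have h_sq : ∀ᶠ n : ℕ in atTop, (n : ℝ) * (x / √n) ^ 2 = x ^ 2 := by
    filter_upwards [eventually_ne_atTop 0] with n hn
    rw [div_pow, Real.sq_sqrt n.cast_nonneg]
    field_simp
  have h_rem : Tendsto (fun n : ℕ ↦ (n : ℂ) * (f (x / √n) - (1 + c * (x / √n : ℝ) ^ 2)))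
      atTop (𝓝 0) := by
    have h := (isBigO_of_le atTop fun n : ℕ ↦ (by simp : ‖(n : ℂ)‖ ≤ ‖(n : ℝ)‖)).mul_isLittleO
      (hf.comp_tendsto h_scale)
    refine (isLittleO_one_iff ℝ).1 ((h.congr' .rfl h_sq).trans_isBigO ?_)
    exact isBigO_const_const _ one_ne_zero _
  refine (add_zero (c * x ^ 2) ▸ h_rem.const_add (c * x ^ 2)).congr' ?_
  filter_upwards [h_sq] with n hn
  have hn' : (n : ℂ) * (x / √n : ℝ) ^ 2 = x ^ 2 := by exact_mod_cast hn
  linear_combination (-c) * hn'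

section NatMulSubOne

variable {u v : ℕ → ℂ} {L : ℂ}

lemma tendsto_one_of_tendsto_nat_mul_sub_one
    (hu : Tendsto (fun n : ℕ ↦ (n : ℂ) * (u n - 1)) atTop (𝓝 L)) :
    Tendsto u atTop (𝓝 1) := by
  have h := tendsto_zero_of_isBoundedUnder_smul_of_tendsto_cobounded hu.norm.isBoundedUnder_le
    (RCLike.tendsto_ofReal_atTop_cobounded ℂ |>.comp tendsto_natCast_atTop_atTop)
  simpa using h.add_const 1

lemma tendsto_nat_mul_log_of_tendsto_nat_mul_sub_one
    (hu : Tendsto (fun n : ℕ ↦ (n : ℂ) * (u n - 1)) atTop (𝓝 L)) :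
    Tendsto (fun n : ℕ ↦ (n : ℂ) * log (u n)) atTop (𝓝 L) := by
  simpa using tendsto_nat_mul_log_one_add_of_tendsto hu

lemma tendsto_pow_mul_pow_sub_of_tendsto_nat_mul_sub_one
    (hu : Tendsto (fun n : ℕ ↦ (n : ℂ) * (u n - 1)) atTop (𝓝 L))
    (hv : Tendsto (fun n : ℕ ↦ (n : ℂ) * (v n - 1)) atTop (𝓝 L))
    {a : ℕ → ℕ} (ha : ∀ n, a n ≤ n) :
    Tendsto (fun n ↦ u n ^ a n * v n ^ (n - a n)) atTop (𝓝 (exp L)) := by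
  have hu' := tendsto_nat_mul_log_of_tendsto_nat_mul_sub_one hu
  have hv' := tendsto_nat_mul_log_of_tendsto_nat_mul_sub_one hv
  have h_weight : IsBoundedUnder (· ≤ ·) atTop fun n ↦ ‖(a n : ℂ) / n‖ := by
    refine isBoundedUnder_of_eventually_le (a := 1) (Eventually.of_forall fun n ↦ ?_)
    rw [norm_div, Complex.norm_natCast, Complex.norm_natCast]
    exact div_le_one_of_le₀ (mod_cast ha n) n.cast_nonneg
  have h_exponent : Tendsto (fun n : ℕ ↦ (n : ℂ) * log (v n)
      + ((n : ℂ) * log (u n) - n * log (v n)) * (a n / n)) atTop (𝓝 L) := by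
    have h_diff : Tendsto (fun n : ℕ ↦ (n : ℂ) * log (u n) - n * log (v n)) atTop (𝓝 0) := by
      simpa using hu'.sub hv'
    simpa using hv'.add (h_diff.zero_mul_isBoundedUnder_le h_weight)
  refine ((continuous_exp.tendsto L).comp h_exponent).congr' ?_
  filter_upwards [eventually_ne_atTop 0,
    (tendsto_one_of_tendsto_nat_mul_sub_one hu).eventually_ne one_ne_zero,
    (tendsto_one_of_tendsto_nat_mul_sub_one hv).eventually_ne one_ne_zero] with n hn hun hvn
  have hn' : (n : ℂ) ≠ 0 := Nat.cast_ne_zero.2 hn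
  calc exp ((n : ℂ) * log (v n) + ((n : ℂ) * log (u n) - n * log (v n)) * (a n / n))
      = exp (a n * log (u n) + (n - a n : ℕ) * log (v n)) := by
        rw [Nat.cast_sub (ha n)]; field_simp; ring_nf
    _ = u n ^ a n * v n ^ (n - a n) := by
        rw [exp_add, exp_nat_mul, exp_nat_mul, exp_log hun, exp_log hvn]

end NatMulSubOne

/-- **Central-limit-type convergence for products of characteristic function values.**
If `μ` is a probability measure on `ℝ` with zero mean and finite second moment `V`,
`g` its characteristic function, and `a_n ≤ n` an arbitrary sequence, then for every `x`,
`g(x/√n)^{a_n} · g(-x/√n)^{n-a_n} → exp(-V x² / 2)` as `n → ∞`. -/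
theorem char_fun_clt_limit
    (μ : Measure ℝ) [IsProbabilityMeasure μ]
    (hmean : ∫ x, x ∂μ = 0)
    (hmom : Integrable (fun x => x ^ 2) μ)
    (V : ℝ) (hV : V = ∫ x, x ^ 2 ∂μ)
    (g : ℝ → ℂ) (hg : ∀ t : ℝ, g t = ∫ x, Complex.exp ((t * x : ℝ) * Complex.I) ∂μ)
    (a : ℕ → ℕ) (ha : ∀ n, a n ≤ n) (x : ℝ) :
    Tendsto
      (fun n : ℕ => g (x / Real.sqrt n) ^ (a n) * g (-x / Real.sqrt n) ^ (n - a n))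
      atTop (nhds (Complex.exp (-((V * x ^ 2 / 2 : ℝ) : ℂ)))) := by
  have hg_charFun : g = charFun μ := funext fun t ↦ by simp [hg, charFun_apply_real]
  have h_taylor : (fun t : ℝ ↦ g t - (1 + (-V / 2 : ℂ) * t ^ 2)) =o[𝓝 0] fun t ↦ t ^ 2 := by
    refine (taylor_charFun_two_of_memLp μ
      ((memLp_two_iff_integrable_sq aestronglyMeasurable_id).2 hmom)).congr_left fun t ↦ ?_
    rw [hg_charFun, hmean, ← hV]
    push_cast
    ring
  have hu := tendsto_nat_mul_sub_one_of_isLittleO h_taylor x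
  have hv := tendsto_nat_mul_sub_one_of_isLittleO h_taylor (-x)
  rw [ofReal_neg, neg_sq] at hv
  convert tendsto_pow_mul_pow_sub_of_tendsto_nat_mul_sub_one hu hv ha using 2
  congr 1
  push_cast
  ring
end

section
/- Let E be a finite-dimensional real inner product space, μ a probability measure on E, and ξ ∈ E a fixed vector such that ∫ ⟪ξ, y⟫ dμ(y) = 0 and v = ∫ ⟪ξ, y⟫² dμ(y) < ∞. Denote by χ(η) = ∫ exp(i ⟪η, y⟫) dμ(y) the characteristic function of μ. Then for any sequence of natural numbers (a_n) with a_n ≤ n for all n, lim_{n→∞} χ(ξ/√n)^{a_n} · χ(-ξ/√n)^{n - a_n} = exp(-v/2). -/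
/-!
Pushing `μ` forward along `⟪ξ, ·⟫` gives a centered law `ν` on `ℝ` with second moment `v`, and
`χ (s • ξ)` is the characteristic function `φ` of `ν` at `s`. By Taylor's theorem
`φ s = 1 - v s² / 2 + o(s²)`, so both `χ (±ξ / √n)` are `1 - v / (2n) + o(1/n)` and
`n log χ (±ξ / √n) → -v/2`. The logarithm of the product is the convex combination of these two
sequences with weights `a n / n` and `1 - a n / n`, hence also tends to `-v/2`.
-/

open MeasureTheory Complex Filter
open scoped Topology

theorem tendsto_convex_comb_of_tendsto {x y : ℕ → ℂ} {t : ℂ} (hx : Tendsto x atTop (𝓝 t))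
    (hy : Tendsto y atTop (𝓝 t)) {r : ℕ → ℝ} (hr : ∀ n, r n ∈ Set.Icc (0 : ℝ) 1) :
    Tendsto (fun n ↦ (r n : ℂ) * x n + (1 - r n : ℝ) * y n) atTop (𝓝 t) := by
  rw [tendsto_iff_norm_sub_tendsto_zero] at hx hy ⊢
  refine squeeze_zero (fun _ ↦ norm_nonneg _) (fun n ↦ ?_) (by simpa using hx.add hy)
  obtain ⟨hr0, hr1⟩ := hr n
  have hsplit : (r n : ℂ) * x n + (1 - r n : ℝ) * y n - t
      = (r n : ℂ) * (x n - t) + (1 - r n : ℝ) * (y n - t) := by push_cast; ring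
  calc ‖(r n : ℂ) * x n + (1 - r n : ℝ) * y n - t‖
      ≤ r n * ‖x n - t‖ + (1 - r n) * ‖y n - t‖ := by
        rw [hsplit]
        refine (norm_add_le _ _).trans_eq ?_
        rw [norm_mul, norm_mul, norm_real, norm_real, Real.norm_of_nonneg hr0,
          Real.norm_of_nonneg (by linarith)]
    _ ≤ ‖x n - t‖ + ‖y n - t‖ := by
        gcongr <;> nlinarith [norm_nonneg (x n - t), norm_nonneg (y n - t)]

theorem tendsto_one_of_tendsto_nat_mul_sub_one_s2 {f : ℕ → ℂ} {t : ℂ}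
    (hf : Tendsto (fun n ↦ n * (f n - 1)) atTop (𝓝 t)) : Tendsto f atTop (𝓝 1) := by
  have h := (tendsto_inv_atTop_nhds_zero_nat (𝕜 := ℂ)).mul hf
  rw [zero_mul] at h
  refine tendsto_sub_nhds_zero_iff.1 (h.congr' ?_)
  filter_upwards [eventually_ne_atTop 0] with n hn
  field_simp

theorem tendsto_pow_mul_pow_sub_exp_of_tendsto {f g : ℕ → ℂ} {t : ℂ}
    (hf : Tendsto (fun n ↦ n * (f n - 1)) atTop (𝓝 t))
    (hg : Tendsto (fun n ↦ n * (g n - 1)) atTop (𝓝 t)) {a : ℕ → ℕ} (ha : ∀ n, a n ≤ n) :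
    Tendsto (fun n ↦ f n ^ a n * g n ^ (n - a n)) atTop (𝓝 (exp t)) := by
  have hlog : ∀ {f : ℕ → ℂ}, Tendsto (fun n ↦ n * (f n - 1)) atTop (𝓝 t) →
      Tendsto (fun n ↦ n * log (f n)) atTop (𝓝 t) := fun hf ↦ by
    simpa using tendsto_nat_mul_log_one_add_of_tendsto hf
  have hweights : ∀ n, (a n / n : ℝ) ∈ Set.Icc (0 : ℝ) 1 := fun n ↦
    ⟨by positivity, div_le_one_of_le₀ (mod_cast ha n) n.cast_nonneg⟩
  refine ((continuous_exp.tendsto t).comp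
    (tendsto_convex_comb_of_tendsto (hlog hf) (hlog hg) hweights)).congr' ?_
  filter_upwards [eventually_ne_atTop 0,
    (tendsto_one_of_tendsto_nat_mul_sub_one_s2 hf).eventually_ne one_ne_zero,
    (tendsto_one_of_tendsto_nat_mul_sub_one_s2 hg).eventually_ne one_ne_zero] with n hn hf0 hg0
  have hn' : (n : ℂ) ≠ 0 := Nat.cast_ne_zero.2 hn
  have hexponent : ((a n / n : ℝ) : ℂ) * (n * log (f n)) + ((1 - a n / n : ℝ) : ℂ) * (n * log (g n))
      = a n * log (f n) + (n - a n : ℕ) * log (g n) := by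
    push_cast [ha n]
    field_simp
  rw [Function.comp_apply, hexponent, exp_add, exp_nat_mul, exp_nat_mul, exp_log hf0, exp_log hg0]

theorem tendsto_nat_mul_sub_one_of_isLittleO_s2 {φ : ℝ → ℂ} {c : ℂ}
    (hφ : (fun s ↦ φ s - (1 + c * s ^ 2)) =o[𝓝 0] fun s ↦ s ^ 2)
    {s : ℕ → ℝ} (hs : ∀ n, s n ^ 2 = (n : ℝ)⁻¹) :
    Tendsto (fun n ↦ n * (φ (s n) - 1)) atTop (𝓝 c) := by
  have hs0 : Tendsto s atTop (𝓝 0) := by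
    rw [tendsto_zero_iff_abs_tendsto_zero]
    have := (Real.continuous_sqrt.tendsto 0).comp tendsto_inv_atTop_nhds_zero_nat
    simpa [Function.comp_def, ← hs, Real.sqrt_sq_eq_abs] using this
  rw [← tendsto_sub_nhds_zero_iff]
  refine (hφ.comp_tendsto hs0).tendsto_inv_smul_nhds_zero.congr' ?_
  filter_upwards [eventually_ne_atTop 0] with n hn
  have hsn : (s n : ℂ) ^ 2 = (n : ℂ)⁻¹ := by
    rw [← ofReal_pow, hs n, ofReal_inv, ofReal_natCast]
  have hn' : (n : ℂ) ≠ 0 := Nat.cast_ne_zero.2 hn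
  simp only [Function.comp_apply, hs, inv_inv, real_smul, hsn]
  push_cast
  field_simp
  ring

theorem taylor_charFun_two_of_integrable_sq {ν : Measure ℝ} [IsProbabilityMeasure ν]
    (h0 : ∫ x, x ∂ν = 0) (h2 : Integrable (fun x ↦ x ^ 2) ν) :
    (fun t ↦ charFun ν t - (1 + -(((∫ x, x ^ 2 ∂ν) / 2 : ℝ) : ℂ) * (t : ℂ) ^ 2)) =o[𝓝 0]
      fun t ↦ t ^ 2 := by
  have hmem : MemLp id 2 ν := (memLp_two_iff_integrable_sq (by fun_prop)).2 h2
  have h := taylor_isLittleO_univ (x₀ := 0) (contDiff_charFun hmem)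
  simp_rw [taylorWithinEval_charFun_zero hmem, sub_zero] at h
  refine h.congr_left fun t ↦ ?_
  simp [Finset.sum_range_succ, h0]
  linear_combination (t ^ 2 * (∫ x, x ^ 2 ∂ν : ℝ) / 2 : ℂ) * I_sq

theorem char_fun_directional_clt_limit_general
    {E : Type*} [NormedAddCommGroup E] [InnerProductSpace ℝ E]
    [MeasurableSpace E] [BorelSpace E]
    (μ : Measure E) [IsProbabilityMeasure μ] (ξ : E)
    (hmean : ∫ y, (inner ℝ ξ y : ℝ) ∂μ = 0)
    (hmom : Integrable (fun y => (inner ℝ ξ y : ℝ) ^ 2) μ)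
    (v : ℝ) (hv : v = ∫ y, (inner ℝ ξ y : ℝ) ^ 2 ∂μ)
    (χ : E → ℂ) (hχ : ∀ η : E, χ η = ∫ y, Complex.exp (((inner ℝ η y : ℝ) : ℂ) * Complex.I) ∂μ)
    (a : ℕ → ℕ) (ha : ∀ n, a n ≤ n) :
    Tendsto
      (fun n : ℕ =>
        χ ((Real.sqrt n)⁻¹ • ξ) ^ (a n) * χ (-((Real.sqrt n)⁻¹ • ξ)) ^ (n - a n))
      atTop (nhds (Complex.exp (-((v / 2 : ℝ) : ℂ)))) := by
  have hX : Measurable (inner ℝ ξ) := (continuous_const.inner continuous_id).measurable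
  set ν := μ.map (inner ℝ ξ)
  have : IsProbabilityMeasure ν := Measure.isProbabilityMeasure_map hX.aemeasurable
  have hχν (s : ℝ) : χ (s • ξ) = charFun ν s := by
    rw [hχ, charFun_apply_real, integral_map hX.aemeasurable (by fun_prop)]
    simp [real_inner_smul_left, mul_assoc]
  have hν0 : ∫ x, x ∂ν = 0 := by rwa [integral_map hX.aemeasurable (by fun_prop)]
  have hν2 : ∫ x, x ^ 2 ∂ν = v := by rw [hv, integral_map hX.aemeasurable (by fun_prop)]
  have htaylor := taylor_charFun_two_of_integrable_sq hν0
    ((integrable_map_measure (by fun_prop) hX.aemeasurable).2 hmom)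
  rw [hν2] at htaylor
  have hs (n : ℕ) : (√n)⁻¹ ^ 2 = (n : ℝ)⁻¹ := by simp [inv_pow]
  simp only [← neg_smul, hχν]
  exact tendsto_pow_mul_pow_sub_exp_of_tendsto
    (tendsto_nat_mul_sub_one_of_isLittleO_s2 htaylor hs)
    (tendsto_nat_mul_sub_one_of_isLittleO_s2 htaylor (s := fun n ↦ -(√n)⁻¹) (by simp [hs])) ha

/-- **Directional central-limit convergence of the characteristic function.**
Let `E` be a finite-dimensional real inner product space, `μ` a probability measure on `E`,
and `ξ ∈ E` with `∫ ⟪ξ,y⟫ dμ = 0` and finite directional second moment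
`v = ∫ ⟪ξ,y⟫² dμ`. Then for any sequence `a_n ≤ n`,
`χ(ξ/√n)^{a_n} · χ(-ξ/√n)^{n-a_n} → exp(-v/2)`. -/
theorem char_fun_directional_clt_limit
    {E : Type*} [NormedAddCommGroup E] [InnerProductSpace ℝ E] [FiniteDimensional ℝ E]
    [MeasurableSpace E] [BorelSpace E]
    (μ : Measure E) [IsProbabilityMeasure μ] (ξ : E)
    (hmean : ∫ y, (inner ℝ ξ y : ℝ) ∂μ = 0)
    (hmom : Integrable (fun y => (inner ℝ ξ y : ℝ) ^ 2) μ)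
    (v : ℝ) (hv : v = ∫ y, (inner ℝ ξ y : ℝ) ^ 2 ∂μ)
    (χ : E → ℂ) (hχ : ∀ η : E, χ η = ∫ y, Complex.exp (((inner ℝ η y : ℝ) : ℂ) * Complex.I) ∂μ)
    (a : ℕ → ℕ) (ha : ∀ n, a n ≤ n) :
    Tendsto
      (fun n : ℕ =>
        χ ((Real.sqrt n)⁻¹ • ξ) ^ (a n) * χ (-((Real.sqrt n)⁻¹ • ξ)) ^ (n - a n))
      atTop (nhds (Complex.exp (-((v / 2 : ℝ) : ℂ)))) :=
  char_fun_directional_clt_limit_general μ ξ hmean hmom v hv χ hχ a ha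
end
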